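/- arXiv:1702.07584 — 4 statements merged into one kernel-verified Lean document; each statement's English description precedes it below -/
import Mathlib

section
/- Let n ≥ 1 and κ ∈ [−1/n, +∞) with κ ≠ 0. Then for every symmetric positive definite n×n real matrix M one has (1/κ)·det(M)^{−κ} ≥ 1/κ − tr(M − I); equivalently, 𝒢_κ(M) := (1/κ)·det(M)^{−κ} − 1/κ + tr(M − I) ≥ 0. -/
/-!
Let `g = det M ^ (1/n)` be the geometric mean of the eigenvalues of `M`. AM–GM gives
`n * g ≤ tr M`, and `det M ^ (-κ) = g ^ (-n κ)`, so the claim reduces to the one-dimensional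
tangent inequality `s⁻¹ - (x - 1) ≤ s⁻¹ * x ^ (-s)` with `x = g`, `s = n κ ≥ -1`.
-/

open Matrix

namespace Real

/-- For `s < 0` this is Bernoulli's inequality, for `s > 0` it follows from `1 + y ≤ exp y` and
`log x ≤ x - 1`. -/
theorem inv_sub_le_inv_mul_rpow_neg {x s : ℝ} (hx : 0 < x) (hs : -1 ≤ s) (hs0 : s ≠ 0) :
    s⁻¹ - (x - 1) ≤ s⁻¹ * x ^ (-s) := by
  have hsplit : s⁻¹ - (x - 1) = s⁻¹ * (1 + (-s) * (x - 1)) := by field_simp; ring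
  rw [hsplit]
  rcases hs0.lt_or_gt with hneg | hpos
  · have bernoulli : x ^ (-s) ≤ 1 + (-s) * (x - 1) := by
      simpa using rpow_one_add_le_one_add_mul_self (s := x - 1) (by linarith)
        (neg_nonneg.2 hneg.le) (by linarith)
    exact mul_le_mul_of_nonpos_left bernoulli (inv_nonpos.2 hneg.le)
  · have tangent : 1 + (-s) * (x - 1) ≤ x ^ (-s) :=
      calc 1 + (-s) * (x - 1) ≤ (-s) * log x + 1 := by
            nlinarith [log_le_sub_one_of_pos hx]
        _ ≤ exp ((-s) * log x) := add_one_le_exp _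
        _ = x ^ (-s) := by rw [rpow_def_of_pos hx, mul_comm]
    exact mul_le_mul_of_nonneg_left tangent (inv_nonneg.2 hpos.le)

end Real

theorem Matrix.PosDef.det_rpow_inv_card_le_trace_div_card {ι : Type*} [Fintype ι]
    [DecidableEq ι] [Nonempty ι] {A : Matrix ι ι ℝ} (hA : A.PosDef) :
    A.det ^ ((Fintype.card ι : ℝ)⁻¹) ≤ A.trace / Fintype.card ι := by
  have amgm := Real.geom_mean_le_arith_mean Finset.univ (fun _ ↦ 1) hA.isHermitian.eigenvalues
    (fun _ _ ↦ zero_le_one) (by simp [Fintype.card_pos]) (fun i _ ↦ (hA.eigenvalues_pos i).le)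
  simpa [hA.isHermitian.det_eq_prod_eigenvalues, hA.isHermitian.trace_eq_sum_eigenvalues]
    using amgm

/-- for `n ≥ 1`, `κ ∈ [-1/n, ∞)`, `κ ≠ 0` and `M` a symmetric positive
definite `n × n` real matrix, `(1/κ) * det M ^ (-κ) ≥ 1/κ - tr (M - I)`. -/
theorem det_rpow_tangent_at_id (n : ℕ) (hn : 1 ≤ n) (κ : ℝ)
    (hκl : -(1 / (n : ℝ)) ≤ κ) (hκ0 : κ ≠ 0)
    (M : Matrix (Fin n) (Fin n) ℝ) (hM : M.PosDef) :
    (1 / κ) * M.det ^ (-κ) ≥ 1 / κ - (M - 1).trace := by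
  have : Nonempty (Fin n) := ⟨⟨0, hn⟩⟩
  have hn0 : (0 : ℝ) < n := by exact_mod_cast hn
  set g := M.det ^ ((n : ℝ)⁻¹)
  have amgm : n * g ≤ M.trace := by
    have := hM.det_rpow_inv_card_le_trace_div_card
    rw [Fintype.card_fin, le_div_iff₀ hn0] at this
    linarith
  have hdet : M.det ^ (-κ) = g ^ (-(n * κ)) := by
    rw [← Real.rpow_mul hM.det_pos.le]
    field_simp
  have hs : -1 ≤ n * κ := by
    simpa [mul_inv_cancel₀ hn0.ne'] using mul_le_mul_of_nonneg_left hκl hn0.le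
  have tangent := Real.inv_sub_le_inv_mul_rpow_neg (x := g) (Real.rpow_pos_of_pos hM.det_pos _) hs
    (mul_ne_zero hn0.ne' hκ0)
  rw [hdet, trace_sub, trace_one, Fintype.card_fin, ge_iff_le]
  calc 1 / κ - (M.trace - n) ≤ 1 / κ - (n * g - n) := by linarith
    _ = n * ((n * κ)⁻¹ - (g - 1)) := by field_simp
    _ ≤ n * ((n * κ)⁻¹ * g ^ (-(n * κ))) := by gcongr
    _ = 1 / κ * g ^ (-(n * κ)) := by field_simp
end

section
/- Let n ≥ 1 and β > 0. There is a numerical constant c > 0 (one may take c = 3/10) such that for every symmetric positive definite n×n real matrix M, with μ₁, …, μ_n the eigenvalues of M − I, one has β·det(M)^{−1/β} − β + tr(M − I) ≥ c·∑_{i=1}^n min{μ_i², |μ_i|}. -/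
/-!
Write `μᵢ` for the eigenvalues of `M - 1`. Since `det M = ∏ (1 + μᵢ)`,
`tr (M - 1) = ∑ μᵢ` and `β (x ^ (-1/β) - 1) ≥ -log x` (from `exp t ≥ 1 + t`), the left
side is at least `∑ (μᵢ - log (1 + μᵢ))`. With `s = √(1 + μ)`,
`log (1 + μ) = 2 log s ≤ 2 (s - 1)` gives `μ - log (1 + μ) ≥ (s - 1) ^ 2`, and
`(s - 1) ^ 2 ≥ min (μ ^ 2) |μ| / 6` because `μ = (s - 1) (s + 1)`.
-/

open Matrix

namespace Real

lemma sq_sub_one_le_sq_sub_one_sub_log_sq {s : ℝ} (hs : 0 < s) :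
    (s - 1) ^ 2 ≤ s ^ 2 - 1 - log (s ^ 2) := by
  rw [log_pow, Nat.cast_ofNat]
  nlinarith [log_le_sub_one_of_pos hs]

lemma min_sq_abs_sq_sub_one_le {s : ℝ} (hs : 0 ≤ s) :
    min ((s ^ 2 - 1) ^ 2) |s ^ 2 - 1| ≤ 6 * (s - 1) ^ 2 := by
  rcases le_total (s ^ 2) 2 with h | h
  · -- `(s + 1) ^ 2 ≤ 6` since `s ≤ √2`
    have hs2 : s ≤ 3 / 2 := by nlinarith
    refine (min_le_left _ _).trans ?_
    nlinarith [mul_nonneg (sq_nonneg (s - 1)) (by linarith : (0 : ℝ) ≤ 3 / 2 - s)]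
  · -- `s + 1 ≤ 6 (s - 1)` since `s ≥ √2`
    have hs75 : 7 / 5 ≤ s := by nlinarith
    refine (min_le_right _ _).trans ?_
    rw [abs_of_nonneg (by linarith)]
    nlinarith

lemma min_sq_abs_le_six_mul_sub_log_one_add {μ : ℝ} (hμ : -1 < μ) :
    min (μ ^ 2) |μ| ≤ 6 * (μ - log (1 + μ)) := by
  obtain ⟨s, hs, rfl⟩ : ∃ s : ℝ, 0 < s ∧ μ = s ^ 2 - 1 :=
    ⟨√(1 + μ), sqrt_pos.mpr (by linarith), by rw [sq_sqrt (by linarith)]; ring⟩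
  rw [add_sub_cancel]
  linarith [min_sq_abs_sq_sub_one_le hs.le, sq_sub_one_le_sq_sub_one_sub_log_sq hs]

lemma neg_log_le_mul_rpow_neg_inv_sub {x β : ℝ} (hx : 0 < x) (hβ : 0 < β) :
    -log x ≤ β * x ^ (-(1 / β)) - β := by
  have h := mul_le_mul_of_nonneg_left (add_one_le_exp (log x * (-(1 / β)))) hβ.le
  rw [rpow_def_of_pos hx]
  field_simp at h ⊢
  linarith

end Real

namespace Matrix.IsHermitian

open scoped ComplexOrder
open Unitary

variable {𝕜 n : Type*} [RCLike 𝕜] [Fintype n] [DecidableEq n] {A : Matrix n n 𝕜}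

lemma one_add_eq_conjStarAlgAut_diagonal (hA : A.IsHermitian) :
    1 + A = conjStarAlgAut 𝕜 _ hA.eigenvectorUnitary
      (diagonal fun i ↦ ((1 + hA.eigenvalues i : ℝ) : 𝕜)) := by
  conv_lhs => rw [hA.spectral_theorem, ← map_one (conjStarAlgAut 𝕜 _ hA.eigenvectorUnitary),
    ← map_add, ← diagonal_one, diagonal_add]
  simp

lemma det_one_add (hA : A.IsHermitian) :
    det (1 + A) = ∏ i, ((1 + hA.eigenvalues i : ℝ) : 𝕜) := by
  rw [hA.one_add_eq_conjStarAlgAut_diagonal, conjStarAlgAut_apply, det_mul_right_comm,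
    mul_star_self_of_mem hA.eigenvectorUnitary.2, one_mul, det_diagonal]

lemma posDef_one_add_iff (hA : A.IsHermitian) :
    (1 + A).PosDef ↔ ∀ i, 0 < 1 + hA.eigenvalues i := by
  rw [hA.one_add_eq_conjStarAlgAut_diagonal, conjStarAlgAut_apply,
    Unitary.isUnit_coe.posDef_star_right_conjugate_iff, posDef_diagonal_iff]
  simp only [RCLike.ofReal_pos]

end Matrix.IsHermitian

open Real Finset in
/-- there is a numerical constant `c > 0` (e.g. `c = 3/10`) such that for
every `n ≥ 1`, `β > 0` and every symmetric positive definite `n × n` real matrix `M`,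
with `μ₁, …, μ_n` the eigenvalues of `M - I`,
`β * det M ^ (-1/β) - β + tr (M - I) ≥ c * ∑ i, min (μ i ^ 2) |μ i|`. -/
theorem quantitative_det_trace_case1 :
    ∃ c : ℝ, 0 < c ∧
      ∀ (n : ℕ), 1 ≤ n → ∀ β : ℝ, 0 < β →
        ∀ M : Matrix (Fin n) (Fin n) ℝ, ∀ hM : M.PosDef,
          β * M.det ^ (-(1 / β)) - β + (M - 1).trace ≥
            c * ∑ i, min ((hM.1.sub isHermitian_one).eigenvalues i ^ 2)
              |(hM.1.sub isHermitian_one).eigenvalues i| := by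
  refine ⟨1 / 6, by norm_num, fun n _ β hβ M hM ↦ ?_⟩
  set hA := hM.1.sub isHermitian_one
  set μ := hA.eigenvalues
  have hM_eq : M = 1 + (M - 1) := (add_sub_cancel 1 M).symm
  have hμ : ∀ i, 0 < 1 + μ i := hA.posDef_one_add_iff.mp (hM_eq ▸ hM)
  have hlog_det : log M.det = ∑ i, log (1 + μ i) := by
    rw [hM_eq, hA.det_one_add]
    exact log_prod fun i _ ↦ (hμ i).ne'
  have htrace : (M - 1).trace = ∑ i, μ i := by simpa using hA.trace_eq_sum_eigenvalues
  calc 1 / 6 * ∑ i, min (μ i ^ 2) |μ i|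
      ≤ ∑ i, (μ i - log (1 + μ i)) := by
        rw [mul_sum]
        gcongr with i
        linarith [min_sq_abs_le_six_mul_sub_log_one_add (by linarith [hμ i] : -1 < μ i)]
    _ = -log M.det + (M - 1).trace := by rw [hlog_det, htrace, sum_sub_distrib]; ring
    _ ≤ β * M.det ^ (-(1 / β)) - β + (M - 1).trace := by
        linarith [neg_log_le_mul_rpow_neg_inv_sub hM.det_pos hβ]
end

section
/- For every real number t > −1 one has log(1 + t) ≤ t − (3/10)·min{t², |t|}. -/
/-!
Split at `|t| = 1`, where `min (t ^ 2) |t|` changes branch. For `-1 < t ≤ 0` the series of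
`-log (1 - x)` gives `log (1 + t) ≤ t - t ^ 2 / 2`. For `0 ≤ t ≤ 1` exponentiate and compare `1 + t`
with the cubic Taylor polynomial of `exp` at `t - 3 t ^ 2 / 10`. For `t ≥ 1` the tangent line of
`log` at `2` gives `log (1 + t) ≤ log 2 + (t - 1) / 2 ≤ 7 t / 10`, as `log 2 < 7 / 10`.
-/

open Real Finset

theorem log_one_add_le_sub_sq_div_two {t : ℝ} (ht : -1 < t) (ht0 : t ≤ 0) :
    log (1 + t) ≤ t - t ^ 2 / 2 := by
  have hsum := hasSum_pow_div_log_of_abs_lt_one (x := -t) (by rw [abs_lt]; constructor <;> linarith)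
  have hpartial := sum_le_hasSum (range 2)
    (fun n _ => div_nonneg (pow_nonneg (neg_nonneg.2 ht0) _) (by positivity)) hsum
  norm_num [sum_range_succ] at hpartial
  linarith

theorem cubic_le_exp_of_nonneg {x : ℝ} (hx : 0 ≤ x) : 1 + x + x ^ 2 / 2 + x ^ 3 / 6 ≤ exp x := by
  have h := sum_le_exp_of_nonneg hx 4
  norm_num [sum_range_succ, Nat.factorial] at h
  linarith

theorem log_one_add_le_sub_three_tenths_sq {t : ℝ} (ht0 : 0 ≤ t) (ht1 : t ≤ 1) :
    log (1 + t) ≤ t - 3 / 10 * t ^ 2 := by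
  rw [log_le_iff_le_exp (by linarith)]
  refine le_trans ?_ (cubic_le_exp_of_nonneg (by nlinarith : 0 ≤ t - 3 / 10 * t ^ 2))
  -- At `t = 1` this reads `2 ≤ 2.0022…`; the quadratic Taylor polynomial would fall short.
  nlinarith [mul_nonneg ht0 (sub_nonneg.2 ht1), mul_nonneg (mul_nonneg ht0 ht0) (sub_nonneg.2 ht1),
    pow_nonneg ht0 3, pow_nonneg ht0 4]

theorem log_one_add_le_seven_tenths_mul {t : ℝ} (ht : 1 ≤ t) : log (1 + t) ≤ 7 / 10 * t := by
  have htangent : log ((1 + t) / 2) ≤ (1 + t) / 2 - 1 := log_le_sub_one_of_pos (by linarith)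
  rw [log_div (by linarith) two_ne_zero] at htangent
  linarith [log_two_lt_d9]

/-- For every real `t > -1`,
`log (1 + t) ≤ t - (3/10) * min (t^2) |t|`. -/
theorem log_le_sub_min_sq_abs (t : ℝ) (ht : -1 < t) :
    Real.log (1 + t) ≤ t - (3 / 10) * min (t ^ 2) |t| := by
  rcases le_total t 0 with hneg | hnonneg
  · have hmin : min (t ^ 2) |t| = t ^ 2 := min_eq_left (by rw [abs_of_nonpos hneg]; nlinarith)
    rw [hmin]
    linarith [log_one_add_le_sub_sq_div_two ht hneg, sq_nonneg t]
  rcases le_total t 1 with hle | hge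
  · have hmin : min (t ^ 2) |t| = t ^ 2 := min_eq_left (by rw [abs_of_nonneg hnonneg]; nlinarith)
    rw [hmin]
    exact log_one_add_le_sub_three_tenths_sq hnonneg hle
  · have hmin : min (t ^ 2) |t| = t := by
      rw [abs_of_nonneg hnonneg]; exact min_eq_right (by nlinarith)
    rw [hmin]
    linarith [log_one_add_le_seven_tenths_mul hge]
end

section
/- For all real numbers s > 0 and t > 0 one has log(s) ≤ log(t) + (s − t)/t − (s − t)²/(2·max{s, t}²). -/
/-!
Both sides change by the same amount under `(s, t) ↦ (λ s, λ t)`, so it suffices to take `t = 1`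
and `x = s`. For `x ≤ 1`, truncate the Mercator series `-log (1 - y) = ∑ yⁿ⁺¹ / (n + 1)`, whose
terms are nonnegative for `y = 1 - x ≥ 0`, after two terms. For `x ≥ 1`, use
`log x ≤ sinh (log x) = (x - x⁻¹) / 2`; the remaining gap to the claimed bound is `(x - 1)³ / (2 x²)`.
-/

open Real Finset

lemma Real.log_le_sub_one_sub_sq_div_two {x : ℝ} (hx₀ : 0 < x) (hx₁ : x ≤ 1) :
    log x ≤ x - 1 - (x - 1) ^ 2 / 2 := by
  have hy : |1 - x| < 1 := abs_lt.2 ⟨by linarith, by linarith⟩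
  have hsum := sum_le_hasSum (range 2) (fun n _ => by positivity)
    (hasSum_pow_div_log_of_abs_lt_one hy)
  simp only [sum_range_succ, sum_range_zero, sub_sub_cancel] at hsum
  norm_num at hsum
  linarith

lemma Real.log_le_sub_inv_div_two {x : ℝ} (hx : 1 ≤ x) : log x ≤ (x - x⁻¹) / 2 := by
  rw [← sinh_log (by linarith)]
  exact self_le_sinh_iff.2 (log_nonneg hx)

lemma Real.log_le_sub_one_sub_sq_div_two_mul_sq {x : ℝ} (hx : 1 ≤ x) :
    log x ≤ x - 1 - (x - 1) ^ 2 / (2 * x ^ 2) := by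
  have hx₀ : 0 < x := by linarith
  have hgap : x - 1 - (x - 1) ^ 2 / (2 * x ^ 2) - (x - x⁻¹) / 2 = (x - 1) ^ 3 / (2 * x ^ 2) := by
    field_simp
    ring
  have : 0 ≤ (x - 1) ^ 3 / (2 * x ^ 2) := by
    have : 0 ≤ x - 1 := by linarith
    positivity
  linarith [log_le_sub_inv_div_two hx]

lemma Real.log_le_sub_one_sub_sq_div_two_mul_max_sq {x : ℝ} (hx : 0 < x) :
    log x ≤ x - 1 - (x - 1) ^ 2 / (2 * max x 1 ^ 2) := by
  rcases le_total x 1 with h | h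
  · simpa [max_eq_right h] using log_le_sub_one_sub_sq_div_two hx h
  · simpa [max_eq_left h] using log_le_sub_one_sub_sq_div_two_mul_sq h

/-- For all `s > 0` and `t > 0`,
`log s ≤ log t + (s - t)/t - (s - t)^2 / (2 * (max s t)^2)`. -/
theorem log_le_log_add_sub_div_sub_sq (s t : ℝ) (hs : 0 < s) (ht : 0 < t) :
    Real.log s ≤ Real.log t + (s - t) / t - (s - t) ^ 2 / (2 * (max s t) ^ 2) := by
  have hbound := log_le_sub_one_sub_sq_div_two_mul_max_sq (div_pos hs ht)
  have hmax : max (s / t) 1 = max s t / t := by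
    rw [← div_self ht.ne', max_div_div_right ht.le]
  have hmax₀ : 0 < max s t := lt_max_of_lt_left hs
  have hrhs : s / t - 1 - (s / t - 1) ^ 2 / (2 * max (s / t) 1 ^ 2) =
      (s - t) / t - (s - t) ^ 2 / (2 * max s t ^ 2) := by
    rw [hmax]
    field_simp
  rw [log_div hs.ne' ht.ne', hrhs] at hbound
  linarith
end
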